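/- Suppose x ∈ ℝⁿ satisfies (L_f + L_G)·‖x‖ = σ. Then for every consistent pair (f̂, Ĝ) there exists u ∈ ℝᵐ with ‖u‖ ≤ 1 such that f₀ = f̂(x) + Ĝ(x)·u; that is, f₀ belongs to the guaranteed velocity set V^G_x. -/

import Mathlib

/-!
Write `G₀ = R H₀` with `H₀` invertible, so that `Im G₀ = Im R` contains both `w = f₀ - f̂ x`
and the range of `Ĝ x`. The spectral decomposition of `G₀ᵀ G₀` shows `‖G₀ v‖ ≥ σ ‖v‖` on
`(ker G₀)ᗮ`, and `‖Ĝ x - G₀‖ ≤ L_G ‖x‖`, so `Ĝ x` is bounded below by `σ - L_G ‖x‖ = L_f ‖x‖ > 0`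
there. Being injective from `(ker G₀)ᗮ` into `Im G₀`, a space of the same dimension, it is onto:
`w = Ĝ x u` with `L_f ‖x‖ ‖u‖ ≤ ‖w‖ ≤ L_f ‖x‖`. For `x = 0` take `u = 0`.
-/

open Matrix Set

noncomputable def matOpNorm {n m : ℕ} (M : Matrix (Fin n) (Fin m) ℝ) : ℝ :=
  ‖LinearMap.toContinuousLinearMap (Matrix.toEuclideanLin M)‖

noncomputable def appMat {n m : ℕ} (M : Matrix (Fin n) (Fin m) ℝ)
    (v : EuclideanSpace ℝ (Fin m)) : EuclideanSpace ℝ (Fin n) :=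
  Matrix.toEuclideanLin M v

noncomputable def colSpace {n m : ℕ} (M : Matrix (Fin n) (Fin m) ℝ) :
    Submodule ℝ (EuclideanSpace ℝ (Fin n)) :=
  LinearMap.range (Matrix.toEuclideanLin M)

noncomputable def minSV {n m : ℕ} (M : Matrix (Fin n) (Fin m) ℝ) : ℝ :=
  Real.sqrt (sInf {μ : ℝ | μ ≠ 0 ∧
    ∃ i, (show (Mᵀ * M).IsHermitian by
      simpa [Matrix.conjTranspose_eq_transpose_of_trivial] using
        Matrix.isHermitian_conjTranspose_mul_self M).eigenvalues i = μ})

/-- A pair `(fh, Gh)` consistent with the prior knowledge of the dynamics. -/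
structure Consistent {n m : ℕ} (R : Matrix (Fin n) (Fin m) ℝ) (Lf LG : ℝ)
    (f₀ : EuclideanSpace ℝ (Fin n)) (G₀ : Matrix (Fin n) (Fin m) ℝ)
    (fh : EuclideanSpace ℝ (Fin n) → EuclideanSpace ℝ (Fin n))
    (Gh : EuclideanSpace ℝ (Fin n) → Matrix (Fin n) (Fin m) ℝ) : Prop where
  lipf : ∀ y z, ‖fh y - fh z‖ ≤ Lf * ‖y - z‖
  lipG : ∀ y z, matOpNorm (Gh y - Gh z) ≤ LG * ‖y - z‖
  f_zero : fh 0 = f₀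
  G_zero : Gh 0 = G₀
  f_im : ∀ y, fh y ∈ colSpace R
  factor : ∃ Hh : EuclideanSpace ℝ (Fin n) → Matrix (Fin m) (Fin m) ℝ,
    IsUnit (Hh 0) ∧ ∀ y, Gh y = R * Hh y

/-- The guaranteed velocity set at `x`. -/
noncomputable def GVS {n m : ℕ} (R : Matrix (Fin n) (Fin m) ℝ) (Lf LG : ℝ)
    (f₀ : EuclideanSpace ℝ (Fin n)) (G₀ : Matrix (Fin n) (Fin m) ℝ)
    (x : EuclideanSpace ℝ (Fin n)) : Set (EuclideanSpace ℝ (Fin n)) :=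
  ⋂ (fh : EuclideanSpace ℝ (Fin n) → EuclideanSpace ℝ (Fin n))
    (Gh : EuclideanSpace ℝ (Fin n) → Matrix (Fin n) (Fin m) ℝ)
    (_ : Consistent R Lf LG f₀ G₀ fh Gh),
      {w | ∃ u : EuclideanSpace ℝ (Fin m), ‖u‖ ≤ 1 ∧ w = fh x + appMat (Gh x) u}

open RealInnerProductSpace

lemma OrthonormalBasis.mul_norm_sq_le_inner_of_mem_orthogonal_ker {ι E : Type*} [Fintype ι]
    [NormedAddCommGroup E] [InnerProductSpace ℝ E] (b : OrthonormalBasis ι ℝ E)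
    {T : E →ₗ[ℝ] E} {μ : ι → ℝ} (hT : ∀ i, T (b i) = μ i • b i) {c : ℝ}
    (hc : ∀ i, μ i ≠ 0 → c ≤ μ i) {v : E} (hv : v ∈ (LinearMap.ker T)ᗮ) :
    c * ‖v‖ ^ 2 ≤ ⟪T v, v⟫ := by
  have hTv : ⟪T v, v⟫ = ∑ i, μ i * ⟪b i, v⟫ ^ 2 := by
    have hexp : T v = ∑ i, (⟪b i, v⟫ * μ i) • b i := by
      conv_lhs => rw [← b.sum_repr' v]
      simp only [map_sum, map_smul, hT, smul_smul]
    rw [hexp, sum_inner]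
    exact Finset.sum_congr rfl fun i _ => by rw [real_inner_smul_left]; ring
  rw [hTv, ← b.sum_sq_inner_right, Finset.mul_sum]
  refine Finset.sum_le_sum fun i _ => ?_
  by_cases hμ : μ i = 0
  · have hbi : b i ∈ LinearMap.ker T := by simp [hT, hμ]
    simp [(Submodule.mem_orthogonal _ _).1 hv _ hbi, hμ]
  · exact mul_le_mul_of_nonneg_right (hc i hμ) (sq_nonneg _)

lemma colSpace_mul_le {n m k : ℕ} (R : Matrix (Fin n) (Fin m) ℝ) (H : Matrix (Fin m) (Fin k) ℝ) :
    colSpace (R * H) ≤ colSpace R := by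
  rw [colSpace, colSpace, toLpLin_mul_same]
  exact LinearMap.range_comp_le_range _ _

lemma colSpace_mul_of_isUnit {n m : ℕ} (R : Matrix (Fin n) (Fin m) ℝ)
    {H : Matrix (Fin m) (Fin m) ℝ} (hH : IsUnit H) : colSpace (R * H) = colSpace R := by
  refine (colSpace_mul_le R H).antisymm ?_
  obtain ⟨H', hH'⟩ := hH.exists_right_inv
  simpa only [Matrix.mul_assoc, hH', Matrix.mul_one] using colSpace_mul_le (R * H) H'

lemma norm_toEuclideanLin_apply_le {n m : ℕ} (M : Matrix (Fin n) (Fin m) ℝ)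
    (v : EuclideanSpace ℝ (Fin m)) : ‖toEuclideanLin M v‖ ≤ matOpNorm M * ‖v‖ :=
  (LinearMap.toContinuousLinearMap (toEuclideanLin M)).le_opNorm v

lemma inner_toEuclideanLin_transpose_mul_self {n m : ℕ} (G : Matrix (Fin n) (Fin m) ℝ)
    (v : EuclideanSpace ℝ (Fin m)) : ⟪toEuclideanLin (Gᵀ * G) v, v⟫ = ‖toEuclideanLin G v‖ ^ 2 := by
  rw [← conjTranspose_eq_transpose_of_trivial, toLpLin_mul_same, LinearMap.comp_apply,
    toEuclideanLin_conjTranspose_eq_adjoint, LinearMap.adjoint_inner_left,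
    real_inner_self_eq_norm_sq]

lemma sq_minSV_le_eigenvalue {n m : ℕ} (G : Matrix (Fin n) (Fin m) ℝ)
    (hS : (Gᵀ * G).IsHermitian) {i : Fin m} (hi : hS.eigenvalues i ≠ 0) :
    minSV G ^ 2 ≤ hS.eigenvalues i := by
  have hnonneg : ∀ j, 0 ≤ hS.eigenvalues j := G.eigenvalues_conjTranspose_mul_self_nonneg
  set S : Set ℝ := {μ | μ ≠ 0 ∧ ∃ j, hS.eigenvalues j = μ}
  have hS_bdd : BddBelow S := ⟨0, by rintro _ ⟨-, j, rfl⟩; exact hnonneg j⟩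
  have hminSV : minSV G = Real.sqrt (sInf S) := rfl
  rw [hminSV, Real.sq_sqrt (Real.sInf_nonneg (by rintro _ ⟨-, j, rfl⟩; exact hnonneg j))]
  exact csInf_le hS_bdd ⟨hi, i, rfl⟩

lemma minSV_mul_norm_le {n m : ℕ} (G : Matrix (Fin n) (Fin m) ℝ) {v : EuclideanSpace ℝ (Fin m)}
    (hv : v ∈ (LinearMap.ker (toEuclideanLin G))ᗮ) :
    minSV G * ‖v‖ ≤ ‖toEuclideanLin G v‖ := by
  have hS : (Gᵀ * G).IsHermitian := by
    simpa only [conjTranspose_eq_transpose_of_trivial] using isHermitian_conjTranspose_mul_self G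
  have hker : LinearMap.ker (toEuclideanLin (Gᵀ * G)) ≤ LinearMap.ker (toEuclideanLin G) :=
    fun w hw => by
      rw [LinearMap.mem_ker, ← norm_eq_zero, ← pow_eq_zero_iff two_ne_zero,
        ← inner_toEuclideanLin_transpose_mul_self, LinearMap.mem_ker.1 hw, inner_zero_left]
  have hsq := hS.eigenvectorBasis.mul_norm_sq_le_inner_of_mem_orthogonal_ker
    (fun i => PiLp.ext fun j => congrFun (hS.mulVec_eigenvectorBasis i) j)
    (fun i hi => sq_minSV_le_eigenvalue G hS hi) (Submodule.orthogonal_le hker hv)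
  rw [inner_toEuclideanLin_transpose_mul_self, ← mul_pow] at hsq
  have hσv : 0 ≤ minSV G * ‖v‖ := mul_nonneg (Real.sqrt_nonneg _) (norm_nonneg _)
  exact (pow_le_pow_iff_left₀ hσv (norm_nonneg _) two_ne_zero).1 hsq

lemma LinearMap.exists_preimage_of_perturbation {E F : Type*} [NormedAddCommGroup E]
    [InnerProductSpace ℝ E] [FiniteDimensional ℝ E] [NormedAddCommGroup F] [NormedSpace ℝ F]
    {A B : E →ₗ[ℝ] F} {σ δ : ℝ} (hA : ∀ v ∈ (LinearMap.ker A)ᗮ, σ * ‖v‖ ≤ ‖A v‖)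
    (hBA : ∀ v, ‖B v - A v‖ ≤ δ * ‖v‖) (hδσ : δ < σ)
    (hrange : LinearMap.range B ≤ LinearMap.range A)
    {w : F} (hw : w ∈ LinearMap.range A) : ∃ v, B v = w ∧ (σ - δ) * ‖v‖ ≤ ‖w‖ := by
  set K := (LinearMap.ker A)ᗮ
  have hB : ∀ v ∈ K, (σ - δ) * ‖v‖ ≤ ‖B v‖ := fun v hv => by
    have := norm_sub_norm_le (A v) (A v - B v)
    rw [sub_sub_cancel, norm_sub_rev] at this
    linarith [hA v hv, hBA v]
  let T : K →ₗ[ℝ] LinearMap.range A :=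
    (B.domRestrict K).codRestrict _ fun v => hrange (LinearMap.mem_range_self B v)
  have hT_inj : Function.Injective T := by
    refine (injective_iff_map_eq_zero T).2 fun v hv => ?_
    have hBv : B v = 0 := congrArg Subtype.val hv
    have := hB v v.2
    rw [hBv, norm_zero] at this
    exact Subtype.ext (norm_le_zero_iff.1 (nonpos_of_mul_nonpos_right this (sub_pos.2 hδσ)))
  have hdim : Module.finrank ℝ K = Module.finrank ℝ (LinearMap.range A) := by
    have h₁ : Module.finrank ℝ (LinearMap.ker A) + Module.finrank ℝ K = Module.finrank ℝ E :=
      Submodule.finrank_add_finrank_orthogonal _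
    have h₂ := LinearMap.finrank_range_add_finrank_ker A
    omega
  obtain ⟨v, hv⟩ := (LinearMap.injective_iff_surjective_of_finrank_eq_finrank hdim).1 hT_inj ⟨w, hw⟩
  have hBv : B v = w := congrArg Subtype.val hv
  exact ⟨v, hBv, hBv ▸ hB v v.2⟩

namespace Consistent

variable {n m : ℕ} {R : Matrix (Fin n) (Fin m) ℝ} {Lf LG : ℝ} {f₀ : EuclideanSpace ℝ (Fin n)}
  {G₀ : Matrix (Fin n) (Fin m) ℝ} {fh : EuclideanSpace ℝ (Fin n) → EuclideanSpace ℝ (Fin n)}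
  {Gh : EuclideanSpace ℝ (Fin n) → Matrix (Fin n) (Fin m) ℝ}

lemma norm_sub_le (hc : Consistent R Lf LG f₀ G₀ fh Gh) (x : EuclideanSpace ℝ (Fin n)) :
    ‖f₀ - fh x‖ ≤ Lf * ‖x‖ := by
  simpa [hc.f_zero] using hc.lipf 0 x

lemma norm_apply_sub_le (hc : Consistent R Lf LG f₀ G₀ fh Gh) (x : EuclideanSpace ℝ (Fin n))
    (v : EuclideanSpace ℝ (Fin m)) :
    ‖toEuclideanLin (Gh x) v - toEuclideanLin G₀ v‖ ≤ LG * ‖x‖ * ‖v‖ := by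
  rw [← LinearMap.sub_apply, ← map_sub]
  calc _ ≤ matOpNorm (Gh x - G₀) * ‖v‖ := norm_toEuclideanLin_apply_le _ _
    _ ≤ LG * ‖x‖ * ‖v‖ := by
      gcongr
      simpa [hc.G_zero] using hc.lipG x 0

lemma colSpace_le (hc : Consistent R Lf LG f₀ G₀ fh Gh) (x : EuclideanSpace ℝ (Fin n)) :
    colSpace (Gh x) ≤ colSpace R := by
  obtain ⟨Hh, -, hGh⟩ := hc.factor
  exact hGh x ▸ colSpace_mul_le R (Hh x)

end Consistent

lemma mem_GVS_iff {n m : ℕ} {R : Matrix (Fin n) (Fin m) ℝ} {Lf LG : ℝ}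
    {f₀ : EuclideanSpace ℝ (Fin n)} {G₀ : Matrix (Fin n) (Fin m) ℝ}
    {x w : EuclideanSpace ℝ (Fin n)} :
    w ∈ GVS R Lf LG f₀ G₀ x ↔ ∀ fh Gh, Consistent R Lf LG f₀ G₀ fh Gh →
      ∃ u : EuclideanSpace ℝ (Fin m), ‖u‖ ≤ 1 ∧ w = fh x + appMat (Gh x) u := by
  simp only [GVS, Set.mem_iInter]
  rfl

theorem corollary1_boundary_general {n m : ℕ} (R : Matrix (Fin n) (Fin m) ℝ)
    (Lf LG : ℝ) (hLf : 0 < Lf)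
    (f₀ : EuclideanSpace ℝ (Fin n)) (hf₀ : f₀ ∈ colSpace R)
    (H₀ : Matrix (Fin m) (Fin m) ℝ) (hH₀ : IsUnit H₀)
    (G₀ : Matrix (Fin n) (Fin m) ℝ) (hG₀fac : G₀ = R * H₀)
    (x : EuclideanSpace ℝ (Fin n)) (hx : (Lf + LG) * ‖x‖ = minSV G₀) :
    (∀ fh Gh, Consistent R Lf LG f₀ G₀ fh Gh →
      ∃ u : EuclideanSpace ℝ (Fin m), ‖u‖ ≤ 1 ∧ f₀ = fh x + appMat (Gh x) u) ∧
    f₀ ∈ GVS R Lf LG f₀ G₀ x := by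
  have hcol : colSpace G₀ = colSpace R := hG₀fac ▸ colSpace_mul_of_isUnit R hH₀
  have key : ∀ fh Gh, Consistent R Lf LG f₀ G₀ fh Gh →
      ∃ u : EuclideanSpace ℝ (Fin m), ‖u‖ ≤ 1 ∧ f₀ = fh x + appMat (Gh x) u := by
    intro fh Gh hc
    rcases eq_or_ne x 0 with rfl | hx₀
    · exact ⟨0, by simp, by simp [hc.f_zero, appMat]⟩
    have hLfx : 0 < Lf * ‖x‖ := mul_pos hLf (norm_pos_iff.2 hx₀)
    have hw : f₀ - fh x ∈ colSpace G₀ := hcol ▸ Submodule.sub_mem _ hf₀ (hc.f_im x)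
    obtain ⟨u, hu, hu_norm⟩ := LinearMap.exists_preimage_of_perturbation
      (fun _ => minSV_mul_norm_le G₀) (hc.norm_apply_sub_le x) (by linarith)
      ((hc.colSpace_le x).trans hcol.ge) hw
    refine ⟨u, ?_, by rw [appMat, hu]; abel⟩
    have hσδ : minSV G₀ - LG * ‖x‖ = Lf * ‖x‖ := by rw [← hx]; ring
    rw [hσδ] at hu_norm
    exact le_of_mul_le_mul_left (by linarith [hc.norm_sub_le x]) hLfx
  exact ⟨key, mem_GVS_iff.2 key⟩

/-- **Corollary 1.** If `(L_f + L_G)‖x‖ = σ`, then for every consistent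
pair `(f̂, Ĝ)` there is `u` with `‖u‖ ≤ 1` and `f₀ = f̂ x + Ĝ x · u`; that is,
`f₀` belongs to the guaranteed velocity set at `x`. -/
theorem corollary1_boundary {n m : ℕ} (R : Matrix (Fin n) (Fin m) ℝ)
    (Lf LG : ℝ) (hLf : 0 < Lf) (hLG : 0 < LG)
    (f₀ : EuclideanSpace ℝ (Fin n)) (hf₀ : f₀ ∈ colSpace R)
    (H₀ : Matrix (Fin m) (Fin m) ℝ) (hH₀ : IsUnit H₀)
    (G₀ : Matrix (Fin n) (Fin m) ℝ) (hG₀fac : G₀ = R * H₀) (hG₀ : G₀ ≠ 0)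
    (x : EuclideanSpace ℝ (Fin n)) (hx : (Lf + LG) * ‖x‖ = minSV G₀) :
    (∀ fh Gh, Consistent R Lf LG f₀ G₀ fh Gh →
      ∃ u : EuclideanSpace ℝ (Fin m), ‖u‖ ≤ 1 ∧ f₀ = fh x + appMat (Gh x) u) ∧
    f₀ ∈ GVS R Lf LG f₀ G₀ x :=
  corollary1_boundary_general R Lf LG hLf f₀ hf₀ H₀ hH₀ G₀ hG₀fac x hx
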